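/- arXiv:1503.07814 — 6 statements merged into one kernel-verified Lean document; each statement's English description precedes it below -/
import Mathlib

section
/- Let F_f(φ) = ∫ f φ dμ be a linear functional on field configurations and W(f) = exp(iF_f). Then the n-th functional derivative of W(f) at φ in direction h^{⊗n} equals (i∫ f h dμ)^n · W(f)(φ), and consequently the exponential star product formula (F ⋆ G)(φ) = Σ_{n≥0} (ħⁿ/n!) ⟨F^{(n)}(φ), ((i/2)Δ)^{⊗n} G^{(n)}(φ)⟩ yields W(f) ⋆ W(g) = e^{-(iħ/2)Δ(f,g)} W(f+g). -/
open Complex MeasureTheory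

/-- The linear functional `F_f(φ) = ∫ f φ dμ` on field configurations. -/
noncomputable def Ffun (f φ : ℝ → ℝ) : ℝ := ∫ x : ℝ, f x * φ x

/-- The Weyl functional `W(f) = exp(i F_f)`. -/
noncomputable def Wfun (f φ : ℝ → ℝ) : ℂ := Complex.exp (Complex.I * (Ffun f φ : ℝ))

/-- The smeared causal propagator `Δ(f,g) = ∫∫ Δ(x,y) f(x) g(y)`. -/
noncomputable def propPair (Dk : ℝ → ℝ → ℝ) (f g : ℝ → ℝ) : ℂ :=
  ∫ x : ℝ, ∫ y : ℝ, ((Dk x y : ℝ) : ℂ) * (f x : ℝ) * (g y : ℝ)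

/-!
Along the line `λ ↦ φ + λ h` the linear functional `F_f` is affine with slope `F_f(h)`, so
`W(f)` restricted to it is `λ ↦ exp(i F_f(h) λ + i F_f(φ))`, whose `n`-th derivative at `0`
is `(i F_f(h))ⁿ W(f)(φ)`. In the star-product series the two factors `iⁿ` combine to `(-1)ⁿ`,
so it is the exponential series of `-(iħ/2) Δ(f,g)` times `W(f)(φ) W(g)(φ) = W(f+g)(φ)`.
-/

theorem Ffun_add_smul {f φ h : ℝ → ℝ} (hφ : Integrable (fun x => f x * φ x))
    (hh : Integrable (fun x => f x * h x)) (t : ℝ) :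
    Ffun f (φ + t • h) = Ffun f φ + t * Ffun f h := by
  have hpoint : (fun x => f x * (φ + t • h) x) = fun x => f x * φ x + t * (f x * h x) := by
    funext x
    simp only [Pi.add_apply, Pi.smul_apply, smul_eq_mul]
    ring
  rw [Ffun, hpoint, integral_add hφ (hh.const_mul t), integral_const_mul, Ffun, Ffun]

theorem Ffun_add_left {f g φ : ℝ → ℝ} (hf : Integrable (fun x => f x * φ x))
    (hg : Integrable (fun x => g x * φ x)) :
    Ffun (f + g) φ = Ffun f φ + Ffun g φ := by
  simp only [Ffun, Pi.add_apply, add_mul]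
  exact integral_add hf hg

theorem Wfun_add_left {f g φ : ℝ → ℝ} (hf : Integrable (fun x => f x * φ x))
    (hg : Integrable (fun x => g x * φ x)) :
    Wfun (f + g) φ = Wfun f φ * Wfun g φ := by
  rw [Wfun, Wfun, Wfun, Ffun_add_left hf hg, ← Complex.exp_add]
  push_cast
  ring_nf

theorem Wfun_add_smul_eq_cexp {f φ h : ℝ → ℝ} (hφ : Integrable (fun x => f x * φ x))
    (hh : Integrable (fun x => f x * h x)) :
    (fun t : ℝ => Wfun f (φ + t • h))
      = fun t : ℝ => Complex.exp (I * Ffun f h * t + I * Ffun f φ) := by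
  funext t
  rw [Wfun, Ffun_add_smul hφ hh]
  push_cast
  ring_nf

theorem iteratedDeriv_cexp_mul_ofReal_add (c d : ℂ) (n : ℕ) :
    iteratedDeriv n (fun t : ℝ => Complex.exp (c * t + d))
      = fun t : ℝ => c ^ n * Complex.exp (c * t + d) := by
  induction n with
  | zero => simp
  | succ n ih =>
    rw [iteratedDeriv_succ, ih]
    funext t
    have hline : HasDerivAt (fun t : ℝ => c * (t : ℂ) + d) c t := by
      simpa using ((hasDerivAt_id t).ofReal_comp.const_mul c).add_const d
    rw [(hline.cexp.const_mul (c ^ n)).deriv]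
    ring

theorem iteratedDeriv_Wfun_add_smul {f φ h : ℝ → ℝ} (hφ : Integrable (fun x => f x * φ x))
    (hh : Integrable (fun x => f x * h x)) (n : ℕ) :
    iteratedDeriv n (fun t : ℝ => Wfun f (φ + t • h)) 0 = (I * Ffun f h) ^ n * Wfun f φ := by
  rw [Wfun_add_smul_eq_cexp hφ hh, iteratedDeriv_cexp_mul_ofReal_add]
  simp [Wfun]

theorem hasSum_weyl_star_series (ħ P a b : ℂ) :
    HasSum
      (fun n : ℕ =>
        ħ ^ n / (n.factorial : ℂ) * ((I / 2) ^ n * P ^ n * (I ^ n * a) * (I ^ n * b)))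
      (Complex.exp (-(I * ħ / 2) * P) * (a * b)) := by
  have hterm : ∀ n : ℕ,
      ħ ^ n / (n.factorial : ℂ) * ((I / 2) ^ n * P ^ n * (I ^ n * a) * (I ^ n * b))
        = (-(I * ħ / 2) * P) ^ n / (n.factorial : ℂ) * (a * b) := by
    intro n
    have hII : I ^ n * I ^ n = (-1) ^ n := by rw [← mul_pow, I_mul_I]
    rw [neg_mul, neg_pow, ← hII]
    ring
  rw [Complex.exp_eq_exp_ℂ]
  simpa only [hterm] using
    (NormedSpace.expSeries_div_hasSum_exp (-(I * ħ / 2) * P)).mul_right (a * b)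

theorem weyl_functional_derivatives_and_star_general
    (Dk : ℝ → ℝ → ℝ) (hbar : ℝ) (f g : ℝ → ℝ) :
    (∀ (φ h : ℝ → ℝ), Integrable (fun x => f x * φ x) →
      Integrable (fun x => f x * h x) → ∀ n : ℕ,
      iteratedDeriv n (fun lam : ℝ => Wfun f (φ + lam • h)) 0
        = (Complex.I * ((∫ x : ℝ, f x * h x : ℝ) : ℂ)) ^ n * Wfun f φ) ∧
    (∀ φ : ℝ → ℝ, Integrable (fun x => f x * φ x) →
      Integrable (fun x => g x * φ x) →
      HasSum
        (fun n : ℕ => ((hbar : ℂ) ^ n / (n.factorial : ℂ)) *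
          ((Complex.I / 2) ^ n * (propPair Dk f g) ^ n *
            ((Complex.I ^ n) * Wfun f φ) * ((Complex.I ^ n) * Wfun g φ)))
        (Complex.exp (-(Complex.I * hbar / 2) * propPair Dk f g) * Wfun (f + g) φ)) := by
  refine ⟨fun φ h hφ hh n => iteratedDeriv_Wfun_add_smul hφ hh n, fun φ hf hg => ?_⟩
  rw [Wfun_add_left hf hg]
  exact hasSum_weyl_star_series hbar (propPair Dk f g) (Wfun f φ) (Wfun g φ)

/-- The n-th functional (Gateaux) derivative of `W(f)` at `φ` in direction `h^{⊗n}`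
equals `(i ∫ f h dμ)^n W(f)(φ)`, and consequently the exponential star product series
`(F ⋆ G)(φ) = Σ (ħⁿ/n!) ⟨F⁽ⁿ⁾(φ), ((i/2)Δ)^{⊗n} G⁽ⁿ⁾(φ)⟩` sums to
`W(f) ⋆ W(g) = e^{-(iħ/2)Δ(f,g)} W(f+g)`. -/
theorem weyl_functional_derivatives_and_star
    (Dk : ℝ → ℝ → ℝ) (hanti : ∀ x y, Dk x y = - Dk y x) (hbar : ℝ) (f g : ℝ → ℝ) :
    (∀ (φ h : ℝ → ℝ), Integrable (fun x => f x * φ x) →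
      Integrable (fun x => f x * h x) → ∀ n : ℕ,
      iteratedDeriv n (fun lam : ℝ => Wfun f (φ + lam • h)) 0
        = (Complex.I * ((∫ x : ℝ, f x * h x : ℝ) : ℂ)) ^ n * Wfun f φ) ∧
    (∀ φ : ℝ → ℝ, Integrable (fun x => f x * φ x) →
      Integrable (fun x => g x * φ x) →
      HasSum
        (fun n : ℕ => ((hbar : ℂ) ^ n / (n.factorial : ℂ)) *
          ((Complex.I / 2) ^ n * (propPair Dk f g) ^ n *
            ((Complex.I ^ n) * Wfun f φ) * ((Complex.I ^ n) * Wfun g φ)))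
        (Complex.exp (-(Complex.I * hbar / 2) * propPair Dk f g) * Wfun (f + g) φ)) :=
  weyl_functional_derivatives_and_star_general Dk hbar f g
end

section
/- Let H be a symmetric positive semidefinite bilinear form and Δ an antisymmetric bilinear form on a real vector space Y, and let H^ℂ, Δ^ℂ be their canonical sesquilinear extensions to the complexification Y^ℂ. Then the following are equivalent: (1) H^ℂ + (i/2)Δ^ℂ ≥ 0 on Y^ℂ; (2) |⟨f₁, Δ f₂⟩| ≤ 2 ⟨f₁, H f₁⟩^{1/2} ⟨f₂, H f₂⟩^{1/2} for all f₁, f₂ ∈ Y. -/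
open Complex

noncomputable def sesqExt {Y : Type*} [AddCommGroup Y] [Module ℝ Y]
    (B : LinearMap.BilinForm ℝ Y) (u v : Y × Y) : ℂ :=
  ((B u.1 v.1 + B u.2 v.2 : ℝ) : ℂ) + Complex.I * ((B u.1 v.2 - B u.2 v.1 : ℝ) : ℂ)

lemma scalar_lemma (x y D : ℝ) (hx : 0 ≤ x) (hy : 0 ≤ y)
    (h : ∀ t s : ℝ, t * s * D ≤ t ^ 2 * x + s ^ 2 * y) :
    |D| ≤ 2 * Real.sqrt x * Real.sqrt y := by
  have hrhs : 0 ≤ 2 * Real.sqrt x * Real.sqrt y := by positivity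
  rcases eq_or_lt_of_le hx with hx0 | hx0
  · have hD : D = 0 := by
      by_contra hD
      have h1 := h ((y + 1) / D) 1
      rw [← hx0] at h1
      have : y + 1 ≤ y := by
        calc y + 1 = (y + 1) / D * 1 * D := by field_simp
        _ ≤ ((y + 1) / D) ^ 2 * 0 + 1 ^ 2 * y := h1
        _ = y := by ring
      linarith
    simp [hD, hrhs]
  rcases eq_or_lt_of_le hy with hy0 | hy0
  · have hD : D = 0 := by
      by_contra hD
      have h1 := h 1 ((x + 1) / D)
      rw [← hy0] at h1
      have : x + 1 ≤ x := by
        calc x + 1 = 1 * ((x + 1) / D) * D := by field_simp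
        _ ≤ 1 ^ 2 * x + ((x + 1) / D) ^ 2 * 0 := h1
        _ = x := by ring
      linarith
    simp [hD, hrhs]
  · have hsx : (0:ℝ) < Real.sqrt x := Real.sqrt_pos.mpr hx0
    have hsy : (0:ℝ) < Real.sqrt y := Real.sqrt_pos.mpr hy0
    set t := Real.sqrt (Real.sqrt y / Real.sqrt x) with ht
    set s := Real.sqrt (Real.sqrt x / Real.sqrt y) with hs
    have ht2 : t ^ 2 = Real.sqrt y / Real.sqrt x := Real.sq_sqrt (by positivity)
    have hs2 : s ^ 2 = Real.sqrt x / Real.sqrt y := Real.sq_sqrt (by positivity)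
    have hts : t * s = 1 := by
      rw [ht, hs, ← Real.sqrt_mul (by positivity)]
      rw [show Real.sqrt y / Real.sqrt x * (Real.sqrt x / Real.sqrt y) = 1 by
        field_simp]
      exact Real.sqrt_one
    have hxe : x = Real.sqrt x * Real.sqrt x := (Real.mul_self_sqrt hx).symm
    have hye : y = Real.sqrt y * Real.sqrt y := (Real.mul_self_sqrt hy).symm
    have hval : t ^ 2 * x + s ^ 2 * y = 2 * Real.sqrt x * Real.sqrt y := by
      rw [ht2, hs2]
      field_simp
      nlinarith [Real.mul_self_sqrt hx, Real.mul_self_sqrt hy]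
    rw [abs_le]
    constructor
    · have h1 := h (-t) s
      have hn : -t * s = -1 := by rw [neg_mul, hts]
      rw [hn] at h1
      nlinarith [h1, hval]
    · have h1 := h t s
      rw [hts, one_mul, hval] at h1
      exact h1

/-- For a symmetric positive semidefinite bilinear form `H` and an antisymmetric
bilinear form `Δ` on a real vector space `Y`, positivity of `H^ℂ + (i/2)Δ^ℂ` on the
complexification is equivalent to the Cauchy–Schwarz type bound
`|⟨f₁, Δ f₂⟩| ≤ 2 ⟨f₁,H f₁⟩^{1/2} ⟨f₂,H f₂⟩^{1/2}`. -/
theorem positivity_iff_cauchy_schwarz {Y : Type*} [AddCommGroup Y] [Module ℝ Y]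
    (H Dl : LinearMap.BilinForm ℝ Y)
    (hHsym : ∀ f g : Y, H f g = H g f) (hHpos : ∀ f : Y, 0 ≤ H f f)
    (hDanti : ∀ f g : Y, Dl f g = - Dl g f) :
    (∀ u : Y × Y,
        0 ≤ (sesqExt H u u + (Complex.I / 2) * sesqExt Dl u u).re ∧
        (sesqExt H u u + (Complex.I / 2) * sesqExt Dl u u).im = 0) ↔
    (∀ f₁ f₂ : Y, |Dl f₁ f₂| ≤ 2 * Real.sqrt (H f₁ f₁) * Real.sqrt (H f₂ f₂)) := by
  have key : ∀ a b : Y,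
      sesqExt H (a, b) (a, b) + (Complex.I / 2) * sesqExt Dl (a, b) (a, b)
        = ((H a a + H b b - Dl a b : ℝ) : ℂ) := by
    intro a b
    have hDaa : Dl a a = 0 := by have := hDanti a a; linarith
    have hDbb : Dl b b = 0 := by have := hDanti b b; linarith
    have hDba : Dl b a = - Dl a b := hDanti b a
    have hHab : H a b = H b a := hHsym a b
    simp only [sesqExt, hDaa, hDbb, hDba, hHab]
    apply Complex.ext <;> simp <;> ring
  have equiv1 : (∀ u : Y × Y,
      0 ≤ (sesqExt H u u + (Complex.I / 2) * sesqExt Dl u u).re ∧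
      (sesqExt H u u + (Complex.I / 2) * sesqExt Dl u u).im = 0) ↔
      (∀ a b : Y, Dl a b ≤ H a a + H b b) := by
    constructor
    · intro h a b
      have := (h (a, b)).1
      rw [key a b] at this
      simp at this
      linarith
    · intro h u
      obtain ⟨a, b⟩ := u
      rw [key a b]
      constructor
      · simp; linarith [h a b]
      · simp
  rw [equiv1]
  constructor
  · intro h f₁ f₂
    apply scalar_lemma _ _ _ (hHpos f₁) (hHpos f₂)
    intro t s
    have := h (t • f₁) (s • f₂)
    simp only [map_smul, LinearMap.smul_apply, smul_eq_mul] at this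
    nlinarith [this]
  · intro h a b
    have h1 := h a b
    have h2 : 2 * Real.sqrt (H a a) * Real.sqrt (H b b) ≤ H a a + H b b := by
      nlinarith [Real.sq_sqrt (hHpos a), Real.sq_sqrt (hHpos b),
        sq_nonneg (Real.sqrt (H a a) - Real.sqrt (H b b))]
    calc Dl a b ≤ |Dl a b| := le_abs_self _
    _ ≤ _ := h1
    _ ≤ _ := h2
end

section
/- Suppose a map S from test functions to invertible elements of an algebra satisfies Bogoliubov's factorization: S(f+g+h) = S(f+g) S(g)^{-1} S(g+h) whenever the past of supp h does not intersect supp f. Then the relative S-matrices S_g(f) := S(g)^{-1} S(g+f) also satisfy the factorization relation: S_g(f+g'+h) = S_g(f+g') S_g(g')^{-1} S_g(g'+h) whenever supp f does not intersect the past of supp h. -/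
/-- The relative S-matrix `S_g(f) = S(g)⁻¹ S(g+f)`. -/
def relS {D A : Type*} [Monoid A] [AddCommGroup D] (S : D → Aˣ) (g f : D) : Aˣ :=
  (S g)⁻¹ * S (g + f)

/-- If `S` satisfies Bogoliubov's factorization
`S(f+g+h) = S(f+g) S(g)⁻¹ S(g+h)` whenever `supp f ∩ J₋(supp h) = ∅`, then the
relative S-matrices `S_g(f) = S(g)⁻¹S(g+f)` satisfy the same factorization relation:
`S_g(f+g'+h) = S_g(f+g') S_g(g')⁻¹ S_g(g'+h)` whenever `supp f ∩ J₋(supp h) = ∅`. -/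
theorem relative_smatrix_causal_factorization
    {M D A : Type*} [Monoid A] [AddCommGroup D]
    (Jpast : Set M → Set M) (supp : D → Set M)
    (S : D → Aˣ)
    (hfact : ∀ f g h : D, supp f ∩ Jpast (supp h) = ∅ →
      S (f + g + h) = S (f + g) * (S g)⁻¹ * S (g + h))
    (g f g' h : D)
    (hcaus : supp f ∩ Jpast (supp h) = ∅) :
    relS S g (f + g' + h) = relS S g (f + g') * (relS S g g')⁻¹ * relS S g (g' + h) := by
  have key := hfact f (g + g') h hcaus
  have h1 : g + (f + g' + h) = f + (g + g') + h := by abel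
  simp only [relS, h1, key, mul_inv_rev, inv_inv]
  have h2 : g + (f + g') = f + (g + g') := by abel
  have h3 : g + (g' + h) = g + g' + h := by abel
  rw [h2, h3]
  group
end

section
/- Under Bogoliubov's factorization relation for S, the relative S-matrix S_g(f) = S(g)^{-1}S(g+f) depends only on the behavior of g in the past of supp f: if supp(g - g') ∩ J₋(supp f) = ∅ then S_g(f) = S_{g'}(f). -/
/-- Under Bogoliubov's factorization relation, the relative S-matrix
`S_g(f) = S(g)⁻¹S(g+f)` depends only on the behavior of `g` in the past of `supp f`:
if `supp(g - g') ∩ J₋(supp f) = ∅` then `S_g(f) = S_{g'}(f)`. -/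
theorem relative_smatrix_past_dependence
    {M D A : Type*} [Monoid A] [AddCommGroup D]
    (Jpast : Set M → Set M) (supp : D → Set M)
    (S : D → Aˣ)
    (hfact : ∀ f g h : D, supp f ∩ Jpast (supp h) = ∅ →
      S (f + g + h) = S (f + g) * (S g)⁻¹ * S (g + h))
    (g g' f : D)
    (hpast : supp (g - g') ∩ Jpast (supp f) = ∅) :
    relS S g f = relS S g' f := by
  have h := hfact (g - g') g' f hpast
  rw [sub_add_cancel] at h
  simp only [relS, h]
  group
end

section
/- Under Bogoliubov's factorization relation for S, if supp(g - g') does not intersect the future J₊(supp f), then S_g(f) = U^{-1} S_{g'}(f) U where U = S_{g'}(g - g') is a unitary (invertible element) independent of f; i.e. S_g(f) = Ad(S_{g'}(g-g')^{-1})(S_{g'}(f)). -/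
/-- Under Bogoliubov's factorization relation, if `supp(g - g')` does not intersect
the future `J₊(supp f)`, then `S_g(f) = U⁻¹ S_{g'}(f) U` with the unitary
`U = S_{g'}(g - g')` independent of `f`; i.e.
`S_g(f) = Ad(S_{g'}(g-g')⁻¹)(S_{g'}(f))`. -/
theorem relative_smatrix_future_dependence
    {M D A : Type*} [Monoid A] [AddCommGroup D]
    (Jpast Jfut : Set M → Set M) (supp : D → Set M)
    (hdual : ∀ X B : Set M, X ∩ Jpast B = ∅ ↔ Jfut X ∩ B = ∅)
    (S : D → Aˣ)
    (hfact : ∀ f g h : D, supp f ∩ Jpast (supp h) = ∅ →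
      S (f + g + h) = S (f + g) * (S g)⁻¹ * S (g + h))
    (g g' f : D)
    (hfuture : supp (g - g') ∩ Jfut (supp f) = ∅) :
    relS S g f = (relS S g' (g - g'))⁻¹ * relS S g' f * relS S g' (g - g') := by
  have hdisj : supp f ∩ Jpast (supp (g - g')) = ∅ := by
    rw [hdual]
    rw [Set.inter_comm] at hfuture
    exact hfuture
  have key := hfact f g' (g - g') hdisj
  have e1 : f + g' + (g - g') = g + f := by abel
  have e2 : g' + (g - g') = g := by abel
  have e3 : f + g' = g' + f := by abel
  rw [e1, e2, e3] at key
  unfold relS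
  rw [e2, key]
  group
end

section
/- If two test functions f and g have spacelike separated supports, i.e. supp f ∩ J₊(supp g) = ∅ and supp f ∩ J₋(supp g) = ∅, then the S-matrices commute: S(f) S(g) = S(g) S(f), and both equal S(f + g). -/
/-- If `f` and `g` have spacelike separated supports (neither support meets the causal
past or future of the other), then the S-matrices commute:
`S(f) S(g) = S(f+g) = S(g) S(f)`. -/
theorem smatrices_commute_at_spacelike_separation
    {M D A : Type*} [Monoid A] [AddCommGroup D]
    (Jpast Jfut : Set M → Set M) (supp : D → Set M)
    (hdual : ∀ X B : Set M, X ∩ Jpast B = ∅ ↔ Jfut X ∩ B = ∅)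
    (S : D → Aˣ)
    (hS0 : S 0 = 1)
    (hfact : ∀ f g h : D, supp f ∩ Jpast (supp h) = ∅ →
      S (f + g + h) = S (f + g) * (S g)⁻¹ * S (g + h))
    (f g : D)
    (hfut : supp f ∩ Jfut (supp g) = ∅)
    (hpast : supp f ∩ Jpast (supp g) = ∅) :
    S f * S g = S g * S f ∧ S f * S g = S (f + g) := by
  have h1 : S (f + g) = S f * S g := by
    have := hfact f 0 g (by simpa using hpast)
    simpa [hS0] using this
  have hgf : supp g ∩ Jpast (supp f) = ∅ := by
    rw [hdual, Set.inter_comm]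
    exact hfut
  have h2 : S (g + f) = S g * S f := by
    have := hfact g 0 f hgf
    simpa [hS0] using this
  have : S f * S g = S g * S f := by
    rw [← h1, ← h2, add_comm]
  exact ⟨this, h1.symm⟩
end
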